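/- arXiv:0910.2736 — 4 statements merged into one kernel-verified Lean document; each statement's English description precedes it below -/
import Mathlib

section
/- Let a, b : ℕ → ℂ with b_i ≠ 0 for all i, and let A, B be the canonical numerators and denominators of the continued fraction K(a_n/b_n). Suppose the partial sparse sums D_n = Σ_{S ∈ Sp(1,n)} g^S converge to some D ∈ ℂ with D ≠ 0, and the partial sparse sums N_n = Σ_{S ∈ Sp(2,n)} g^S converge to some N ∈ ℂ, as n → ∞. Then the approximants A_n/B_n converge to (a_0/b_0)·N/D as n → ∞. -/
open Finset Filter Topology

/-- `Sp q m` is the collection of all sparse subsets of `{q, q+1, …, m}`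
(sparse: any two distinct elements differ by at least 2). -/
def Sp (q m : ℕ) : Finset (Finset ℕ) :=
  (Finset.Icc q m).powerset.filter (fun S => ∀ i ∈ S, ∀ j ∈ S, i < j → 2 ≤ j - i)

/-- `g a b i = a i / (b (i-1) * b i)`. -/
noncomputable def g (a b : ℕ → ℂ) (i : ℕ) : ℂ := a i / (b (i - 1) * b i)

/-- `gProd a b S = ∏ i ∈ S, g a b i` (the empty product is 1). -/
noncomputable def gProd (a b : ℕ → ℂ) (S : Finset ℕ) : ℂ := ∏ i ∈ S, g a b i

/-- Canonical numerators of the continued fraction `K (a n / b n)`. -/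
noncomputable def contA (a b : ℕ → ℂ) : ℕ → ℂ
  | 0 => 0
  | 1 => a 0
  | (n + 2) => b (n + 1) * contA a b (n + 1) + a (n + 1) * contA a b n

/-- Canonical denominators of the continued fraction `K (a n / b n)`. -/
noncomputable def contB (a b : ℕ → ℂ) : ℕ → ℂ
  | 0 => 1
  | 1 => b 0
  | (n + 2) => b (n + 1) * contB a b (n + 1) + a (n + 1) * contB a b n

noncomputable def F (a b : ℕ → ℂ) (q n : ℕ) : ℂ := ∑ S ∈ Sp q n, gProd a b S

lemma mem_Sp {q m : ℕ} {S : Finset ℕ} :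
    S ∈ Sp q m ↔ S ⊆ Finset.Icc q m ∧ ∀ i ∈ S, ∀ j ∈ S, i < j → 2 ≤ j - i := by
  simp [Sp]

lemma Sp_of_lt {q m : ℕ} (h : m < q) : Sp q m = {∅} := by
  ext S
  simp only [mem_Sp, Finset.mem_singleton]
  constructor
  · rintro ⟨hs, -⟩
    rw [Finset.Icc_eq_empty (by omega)] at hs
    exact Finset.subset_empty.mp hs
  · rintro rfl
    simp

lemma F_of_lt (a b : ℕ → ℂ) {q m : ℕ} (h : m < q) : F a b q m = 1 := by
  simp [F, Sp_of_lt h, gProd]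

lemma F_succ (a b : ℕ → ℂ) {q m : ℕ} (hq : 1 ≤ q) (h : q ≤ m + 1) :
    F a b q (m + 1) = F a b q m + g a b (m + 1) * F a b q (m - 1) := by
  have hsplit := Finset.sum_filter_add_sum_filter_not (Sp q (m+1))
    (fun S => (m+1) ∈ S) (gProd a b)
  have h1 : (Sp q (m+1)).filter (fun S => ¬ (m+1) ∈ S) = Sp q m := by
    ext S
    simp only [Finset.mem_filter, mem_Sp]
    constructor
    · rintro ⟨⟨hs, hsp⟩, hnot⟩
      refine ⟨fun x hx => ?_, hsp⟩
      have := hs hx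
      simp only [Finset.mem_Icc] at this ⊢
      have : x ≠ m + 1 := fun hxe => hnot (hxe ▸ hx)
      omega
    · rintro ⟨hs, hsp⟩
      have hnot : (m+1) ∉ S := fun hm => by
        have := hs hm; simp only [Finset.mem_Icc] at this; omega
      refine ⟨⟨fun x hx => ?_, hsp⟩, hnot⟩
      have := hs hx
      simp only [Finset.mem_Icc] at this ⊢
      omega
  have h2 : (Sp q (m+1)).filter (fun S => (m+1) ∈ S)
      = (Sp q (m-1)).image (insert (m+1)) := by
    ext S
    simp only [Finset.mem_filter, Finset.mem_image, mem_Sp]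
    constructor
    · rintro ⟨⟨hs, hsp⟩, hmem⟩
      refine ⟨S.erase (m+1), ⟨fun x hx => ?_, fun i hi j hj hij => ?_⟩, ?_⟩
      · have hxS := Finset.mem_of_mem_erase hx
        have hxne := Finset.ne_of_mem_erase hx
        have := hs hxS
        simp only [Finset.mem_Icc] at this ⊢
        have h2le : x < m + 1 := lt_of_le_of_ne this.2 hxne
        -- x ≠ m+1 since erased; also sparse with m+1 gives x ≤ m-1
        have := hsp x hxS (m+1) hmem h2le
        omega
      · exact hsp i (Finset.mem_of_mem_erase hi) j (Finset.mem_of_mem_erase hj) hij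
      · rw [Finset.insert_erase hmem]
    · rintro ⟨T, ⟨hTs, hTsp⟩, rfl⟩
      have hTub : ∀ x ∈ T, q ≤ x ∧ x ≤ m - 1 := by
        intro x hx; have := hTs hx; simpa [Finset.mem_Icc] using this
      have hnotin : (m+1) ∉ T := fun hm => by have := hTub _ hm; omega
      refine ⟨⟨?_, ?_⟩, Finset.mem_insert_self _ _⟩
      · intro x hx
        rcases Finset.mem_insert.mp hx with rfl | hx
        · simp [Finset.mem_Icc]; omega
        · have := hTub x hx
          simp only [Finset.mem_Icc]; omega
      · intro i hi j hj hij
        rcases Finset.mem_insert.mp hi with rfl | hi <;>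
          rcases Finset.mem_insert.mp hj with rfl | hj
        · omega
        · have := hTub j hj; omega
        · have := hTub i hi; omega
        · exact hTsp i hi j hj hij
  have h3 : ∑ S ∈ (Sp q (m-1)).image (insert (m+1)), gProd a b S
      = g a b (m+1) * F a b q (m-1) := by
    rw [Finset.sum_image]
    · rw [F, Finset.mul_sum]
      refine Finset.sum_congr rfl fun S hS => ?_
      have hnot : (m+1) ∉ S := by
        rcases mem_Sp.mp hS with ⟨hs, -⟩
        intro hm; have := hs hm; simp only [Finset.mem_Icc] at this; omega
      rw [gProd, Finset.prod_insert hnot]; rfl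
    · intro S hS T hT hST
      have hnS : (m+1) ∉ S := by
        rcases mem_Sp.mp hS with ⟨hs, -⟩
        intro hm; have := hs hm; simp only [Finset.mem_Icc] at this; omega
      have hnT : (m+1) ∉ T := by
        rcases mem_Sp.mp hT with ⟨hs, -⟩
        intro hm; have := hs hm; simp only [Finset.mem_Icc] at this; omega
      have := congrArg (fun X => Finset.erase X (m+1)) hST
      simpa [Finset.erase_insert hnS, Finset.erase_insert hnT] using this
  calc F a b q (m+1)
      = ∑ S ∈ (Sp q (m+1)).filter (fun S => (m+1) ∈ S), gProd a b S
        + ∑ S ∈ (Sp q (m+1)).filter (fun S => ¬ (m+1) ∈ S), gProd a b S := hsplit.symm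
    _ = F a b q m + g a b (m+1) * F a b q (m-1) := by
        rw [h1, h2, h3, add_comm]; rfl

lemma g_succ_succ (a b : ℕ → ℂ) (n : ℕ) :
    g a b (n + 2) = a (n + 2) / (b (n + 1) * b (n + 2)) := rfl

lemma contB_eq (a b : ℕ → ℂ) (hb : ∀ i, b i ≠ 0) (n : ℕ) :
    contB a b (n + 1) = (∏ i ∈ Finset.range (n + 1), b i) * F a b 1 n := by
  induction n using Nat.twoStepInduction with
  | zero => simp [contB, F_of_lt a b (by norm_num : (0:ℕ) < 1)]
  | one =>
    have hF : F a b 1 1 = 1 + g a b 1 * 1 := by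
      rw [F_succ a b le_rfl (by norm_num : 1 ≤ 0 + 1)]
      simp [F_of_lt a b (by norm_num : (0:ℕ) < 1)]
    show b 1 * contB a b 1 + a 1 * contB a b 0 = _
    rw [hF]
    show b 1 * b 0 + a 1 * 1 = _
    have : g a b 1 = a 1 / (b 0 * b 1) := rfl
    rw [this, Finset.prod_range_succ, Finset.prod_range_one]
    have hc : b 0 * b 1 * (a 1 / (b 0 * b 1)) = a 1 :=
      mul_div_cancel₀ _ (mul_ne_zero (hb 0) (hb 1))
    linear_combination -hc
  | more n ih1 ih2 =>
    show b (n + 2) * contB a b (n + 2) + a (n + 2) * contB a b (n + 1) = _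
    rw [ih1, ih2, F_succ a b le_rfl (by omega : 1 ≤ (n+1) + 1)]
    have hm : (n + 1 : ℕ) - 1 = n := by omega
    rw [hm, g_succ_succ, Finset.prod_range_succ (n := n + 2),
      Finset.prod_range_succ (n := n + 1)]
    have hc : b (n+1) * b (n+2) * (a (n+2) / (b (n+1) * b (n+2))) = a (n+2) :=
      mul_div_cancel₀ _ (mul_ne_zero (hb _) (hb _))
    linear_combination -((∏ i ∈ Finset.range (n+1), b i) * F a b 1 n) * hc

lemma contA_eq (a b : ℕ → ℂ) (hb : ∀ i, b i ≠ 0) (n : ℕ) :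
    contA a b (n + 1) = a 0 * (∏ i ∈ Finset.Icc 1 n, b i) * F a b 2 n := by
  induction n using Nat.twoStepInduction with
  | zero => simp [contA, F_of_lt a b (by norm_num : (0:ℕ) < 2)]
  | one =>
    show b 1 * contA a b 1 + a 1 * contA a b 0 = _
    show b 1 * a 0 + a 1 * 0 = _
    rw [F_of_lt a b (by norm_num : (1:ℕ) < 2)]
    rw [show Finset.Icc 1 1 = {1} by rfl]
    simp; ring
  | more n ih1 ih2 =>
    show b (n + 2) * contA a b (n + 2) + a (n + 2) * contA a b (n + 1) = _
    rw [ih1, ih2, F_succ a b (by norm_num) (by omega : 2 ≤ (n+1) + 1)]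
    have hm : (n + 1 : ℕ) - 1 = n := by omega
    rw [hm, g_succ_succ,
      Finset.prod_Icc_succ_top (by omega : 1 ≤ n + 2),
      Finset.prod_Icc_succ_top (by omega : 1 ≤ n + 1)]
    have hc : b (n+1) * b (n+2) * (a (n+2) / (b (n+1) * b (n+2))) = a (n+2) :=
      mul_div_cancel₀ _ (mul_ne_zero (hb _) (hb _))
    linear_combination -(a 0 * (∏ i ∈ Finset.Icc 1 n, b i) * F a b 2 n) * hc

lemma prod_range_eq (b : ℕ → ℂ) (n : ℕ) :
    ∏ i ∈ Finset.range (n + 1), b i = b 0 * ∏ i ∈ Finset.Icc 1 n, b i := by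
  induction n with
  | zero => simp
  | succ n ih =>
    rw [Finset.prod_range_succ, ih, Finset.prod_Icc_succ_top (by omega : 1 ≤ n + 1)]
    ring

/-- If the partial sparse sums converge (with nonzero limit for the denominator
sums), then the approximants of the continued fraction `K (a n / b n)` converge
to `(a 0 / b 0) * N / D`. -/
theorem approximants_tendsto_of_sparse_sums_tendsto (a b : ℕ → ℂ)
    (hb : ∀ i, b i ≠ 0) (D N : ℂ) (hD : D ≠ 0)
    (hDlim : Tendsto (fun n => ∑ S ∈ Sp 1 n, gProd a b S) atTop (𝓝 D))
    (hNlim : Tendsto (fun n => ∑ S ∈ Sp 2 n, gProd a b S) atTop (𝓝 N)) :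
    Tendsto (fun n => contA a b (n + 1) / contB a b (n + 1)) atTop
      (𝓝 ((a 0 / b 0) * N / D)) := by
  have key : ∀ n, a 0 / b 0 * F a b 2 n / F a b 1 n
      = contA a b (n + 1) / contB a b (n + 1) := by
    intro n
    rw [contA_eq a b hb n, contB_eq a b hb n, prod_range_eq]
    have hQ : (∏ i ∈ Finset.Icc 1 n, b i) ≠ 0 :=
      Finset.prod_ne_zero_iff.mpr fun i _ => hb i
    rw [show a 0 * (∏ i ∈ Finset.Icc 1 n, b i) * F a b 2 n
          = (a 0 * F a b 2 n) * ∏ i ∈ Finset.Icc 1 n, b i by ring,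
        show (b 0 * ∏ i ∈ Finset.Icc 1 n, b i) * F a b 1 n
          = (b 0 * F a b 1 n) * ∏ i ∈ Finset.Icc 1 n, b i by ring,
        mul_div_mul_right _ _ hQ,
        div_mul_eq_mul_div, div_div]
  have hmain : Tendsto (fun n => a 0 / b 0 * F a b 2 n / F a b 1 n) atTop
      (𝓝 (a 0 / b 0 * N / D)) := (hNlim.const_mul (a 0 / b 0)).div hDlim hD
  exact hmain.congr key
end

section
/- Let a, b, x : ℕ → ℂ with b_i ≠ 0 for all i, and suppose x satisfies x_{n+2} = b_n·x_{n+1} + a_n·x_n for all n ∈ ℕ. Suppose moreover that x_n/(∏_{i=0}^{n-2} b_i) → 0 as n → ∞, that the partial sparse sums D_n = Σ_{S ∈ Sp(1,n)} g^S converge to some D ∈ ℂ, and that the partial sparse sums N_n = Σ_{S ∈ Sp(2,n)} g^S converge to some N ∈ ℂ. Then x_1·D + x_0·(a_0/b_0)·N = 0; in particular, if also x_0 ≠ 0 and D ≠ 0, then -x_1/x_0 = (a_0/b_0)·N/D. -/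
/-!
Dividing `x (n + 2)` by `b 0 ⋯ b n` turns the recurrence into
`y (n + 2) = y (n + 1) + g (n + 2) * y n`.
Splitting a sparse subset of `{q, …, n + 2}` according to whether it contains `n + 2`, the
sparse sums `D n` and `N n`, hence also `x 1 * D n + x 0 * (a 0 / b 0) * N n`, satisfy the same
recurrence; comparing initial values, `y n = x 1 * D n + x 0 * (a 0 / b 0) * N n`, whose limit is
then both `0` and `x 1 * D + x 0 * (a 0 / b 0) * N`.
-/

open Finset Filter Topology

lemma subset_Icc_of_mem_Sp {q m : ℕ} {S : Finset ℕ} (hS : S ∈ Sp q m) : S ⊆ Icc q m :=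
  mem_powerset.mp (mem_filter.mp hS).1

lemma notMem_of_mem_Sp {q m k : ℕ} {S : Finset ℕ} (hS : S ∈ Sp q m) (hk : m < k) : k ∉ S :=
  fun hkS => by have := mem_Icc.mp (subset_Icc_of_mem_Sp hS hkS); omega

/-- A sparse set containing `m + 2` cannot contain `m + 1`. -/
lemma Sp_add_two {q m : ℕ} (hq : q ≤ m + 2) :
    Sp q (m + 2) = Sp q (m + 1) ∪ (Sp q m).image (insert (m + 2)) := by
  ext S
  simp only [Sp, mem_union, mem_image, mem_filter, mem_powerset, subset_iff, mem_Icc]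
  constructor
  · rintro ⟨hsub, hsp⟩
    by_cases hmS : m + 2 ∈ S
    · refine Or.inr ⟨S.erase (m + 2), ⟨fun i hi => ?_, fun i hi j hj =>
        hsp i (mem_of_mem_erase hi) j (mem_of_mem_erase hj)⟩, insert_erase hmS⟩
      have hne := ne_of_mem_erase hi
      have := hsub (mem_of_mem_erase hi)
      have := hsp i (mem_of_mem_erase hi) _ hmS (by omega)
      omega
    · refine Or.inl ⟨fun i hi => ?_, hsp⟩
      have := hsub hi
      have : i ≠ m + 2 := by rintro rfl; exact hmS hi
      omega
  · rintro (⟨hsub, hsp⟩ | ⟨T, ⟨hTsub, hTsp⟩, rfl⟩)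
    · exact ⟨fun i hi => by have := hsub hi; omega, hsp⟩
    · refine ⟨fun i hi => ?_, fun i hi j hj hij => ?_⟩
      · rcases mem_insert.mp hi with rfl | hi
        · omega
        · have := hTsub hi; omega
      · rcases mem_insert.mp hi with rfl | hi <;> rcases mem_insert.mp hj with rfl | hj
        · omega
        · have := hTsub hj; omega
        · have := hTsub hi; omega
        · exact hTsp i hi j hj hij

lemma sum_prod_Sp_add_two {R : Type*} [CommSemiring R] (f : ℕ → R) {q m : ℕ}
    (hq : q ≤ m + 2) :
    ∑ S ∈ Sp q (m + 2), ∏ i ∈ S, f i = ∑ S ∈ Sp q (m + 1), ∏ i ∈ S, f i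
      + f (m + 2) * ∑ S ∈ Sp q m, ∏ i ∈ S, f i := by
  have hinj : Set.InjOn (insert (m + 2)) (Sp q m : Set (Finset ℕ)) := fun S hS T hT hST => by
    rw [← erase_insert (notMem_of_mem_Sp hS (by omega : m < m + 2)),
      ← erase_insert (notMem_of_mem_Sp hT (by omega : m < m + 2)), hST]
  have hdisj : Disjoint (Sp q (m + 1)) ((Sp q m).image (insert (m + 2))) := by
    rw [disjoint_left]
    intro S hS hS'
    obtain ⟨T, -, rfl⟩ := mem_image.mp hS'
    exact notMem_of_mem_Sp hS (by omega) (mem_insert_self _ _)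
  rw [Sp_add_two hq, sum_union hdisj, sum_image hinj, mul_sum]
  congr 1
  exact sum_congr rfl fun S hS => prod_insert (notMem_of_mem_Sp hS (by omega))

lemma eq_of_two_step_recurrence {R : Type*} [Semiring R] {c u v : ℕ → R}
    (hu : ∀ n, u (n + 2) = u (n + 1) + c n * u n) (hv : ∀ n, v (n + 2) = v (n + 1) + c n * v n)
    (h0 : u 0 = v 0) (h1 : u 1 = v 1) : u = v := by
  funext n
  induction n using Nat.twoStepInduction with
  | zero => exact h0
  | one => exact h1
  | more n ih ih' => rw [hu, hv, ih, ih']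

section

variable {a b x : ℕ → ℂ} (hb : ∀ i, b i ≠ 0)
  (hx : ∀ n, x (n + 2) = b n * x (n + 1) + a n * x n)
include hb hx

lemma div_prod_range_recurrence (n : ℕ) :
    x (n + 4) / ∏ i ∈ range (n + 3), b i = x (n + 3) / ∏ i ∈ range (n + 2), b i
      + g a b (n + 2) * (x (n + 2) / ∏ i ∈ range (n + 1), b i) := by
  have hP : ∏ i ∈ range (n + 1), b i ≠ 0 := prod_ne_zero_iff.mpr fun i _ => hb i
  have h1 := hb (n + 1)
  have h2 := hb (n + 2)
  rw [prod_range_succ, prod_range_succ, hx (n + 2),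
    show g a b (n + 2) = a (n + 2) / (b (n + 1) * b (n + 2)) from rfl]
  field_simp

lemma div_prod_range_eq_sparse_sums (n : ℕ) :
    x (n + 2) / ∏ i ∈ range (n + 1), b i =
      x 1 * ∑ S ∈ Sp 1 n, gProd a b S + x 0 * (a 0 / b 0) * ∑ S ∈ Sp 2 n, gProd a b S := by
  refine congrFun (eq_of_two_step_recurrence (c := fun n => g a b (n + 2))
    (u := fun n => x (n + 2) / ∏ i ∈ range (n + 1), b i)
    (v := fun n =>
      x 1 * ∑ S ∈ Sp 1 n, gProd a b S + x 0 * (a 0 / b 0) * ∑ S ∈ Sp 2 n, gProd a b S)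
    (div_prod_range_recurrence hb hx) (fun n => ?_) ?_ ?_) n
  · simp only [gProd, sum_prod_Sp_add_two _ (show 1 ≤ n + 2 by omega),
      sum_prod_Sp_add_two _ (show 2 ≤ n + 2 by omega)]
    ring
  · rw [show Sp 1 0 = {∅} by decide, show Sp 2 0 = {∅} by decide, hx 0]
    simp only [sum_singleton, gProd, prod_empty, zero_add, prod_range_one]
    field_simp [hb 0]
  · rw [show Sp 1 1 = {∅, {1}} by decide, show Sp 2 1 = {∅} by decide, hx 1, hx 0,
      sum_pair (by decide)]
    simp only [sum_singleton, gProd, prod_empty, prod_singleton, prod_range_succ, range_zero, g]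
    field_simp [hb 0, hb 1]
    ring

end

/-- If a solution of the difference equation is such that
`x n / ∏_{i=0}^{n-2} b i → 0` and the partial sparse sums converge, then
`x 1 * D + x 0 * (a 0 / b 0) * N = 0`; in particular, if `x 0 ≠ 0` and `D ≠ 0`,
then `-x 1 / x 0 = (a 0 / b 0) * N / D`. -/
theorem minimal_solution_ratio (a b x : ℕ → ℂ) (hb : ∀ i, b i ≠ 0)
    (hx : ∀ n, x (n + 2) = b n * x (n + 1) + a n * x n)
    (hzero : Tendsto (fun n => x n / ∏ i ∈ Finset.range (n - 1), b i) atTop (𝓝 0))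
    (D N : ℂ)
    (hDlim : Tendsto (fun n => ∑ S ∈ Sp 1 n, gProd a b S) atTop (𝓝 D))
    (hNlim : Tendsto (fun n => ∑ S ∈ Sp 2 n, gProd a b S) atTop (𝓝 N)) :
    x 1 * D + x 0 * (a 0 / b 0) * N = 0 ∧
      (x 0 ≠ 0 → D ≠ 0 → -x 1 / x 0 = (a 0 / b 0) * N / D) := by
  have hshift : Tendsto (fun n => x (n + 2) / ∏ i ∈ range (n + 1), b i) atTop (𝓝 0) :=
    hzero.comp (tendsto_add_atTop_nat 2)
  have hlim : x 1 * D + x 0 * (a 0 / b 0) * N = 0 := by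
    refine tendsto_nhds_unique ?_ hshift
    simpa only [div_prod_range_eq_sparse_sums hb hx] using
      (hDlim.const_mul (x 1)).add (hNlim.const_mul (x 0 * (a 0 / b 0)))
  refine ⟨hlim, fun hx0 hD => ?_⟩
  rw [div_eq_div_iff hx0 hD]
  linear_combination -hlim
end

section
/- Let c ∈ ℂ not be a nonpositive integer and z ∈ ℂ with ₀F₁(c; z) ≠ 0. Define a, b : ℕ → ℂ by a_0 = c, a_n = z for n ≥ 1, and b_n = c + n for n ≥ 0, and let A, B be the canonical numerators and denominators of the continued fraction K(a_n/b_n) = c/(c + z/((c+1) + z/((c+2) + ⋯))). Then the approximants A_n/B_n converge to ₀F₁(c+1; z)/₀F₁(c; z) as n → ∞. -/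
open Finset Filter Topology

/-- Pochhammer symbol `(c)_k = c (c+1) ⋯ (c+k-1)`, with `(c)_0 = 1`. -/
noncomputable def poch (c : ℂ) (k : ℕ) : ℂ := ∏ j ∈ Finset.range k, (c + j)

/-- The hypergeometric function `₀F₁(c; z) = ∑_{k=0}^∞ z^k / ((c)_k k!)`. -/
noncomputable def F01 (c z : ℂ) : ℂ := ∑' k : ℕ, z ^ k / (poch c k * (Nat.factorial k))

/-!
The denominators have the closed form `B n = ∑ₖ C(n-k, k) zᵏ (c+k)_{n-2k}`, so that
`B n / (c)ₙ = ∑_{2k ≤ n} zᵏ/((c)ₖ k!) · ∏_{j<k} (m+1+j)/(c+k+m+j)` with `m = n - 2k`.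
For fixed `k` the product tends to `1`, and it is bounded by `Cᵏ` uniformly in `m`, so by
Tannery's theorem `B n / (c)ₙ → ₀F₁(c; z)`, dominated by the convergent series `₀F₁(c; C|z|)`.
The numerators are `c` times the denominators of the tail continued fraction, which is the same
fraction with `c + 1` in place of `c`; since `(c)_{n+1} = c (c+1)ₙ`, the ratio converges.
-/

lemma poch_ne_zero {c : ℂ} (hc : ∀ n : ℕ, c ≠ -(n : ℂ)) (k : ℕ) : poch c k ≠ 0 :=
  prod_ne_zero_iff.2 fun j _ h => hc j (by linear_combination h)

lemma poch_succ (c : ℂ) (n : ℕ) : poch c (n + 1) = poch c n * (c + n) :=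
  prod_range_succ _ n

lemma poch_succ' (c : ℂ) (n : ℕ) : poch c (n + 1) = c * poch (c + 1) n := by
  simp only [poch, prod_range_succ', Nat.cast_add, Nat.cast_one, Nat.cast_zero, add_zero]
  rw [mul_comm]
  congr 1
  exact prod_congr rfl fun j _ => by ring

lemma poch_add (c : ℂ) (p q : ℕ) : poch c (p + q) = poch c p * poch (c + p) q := by
  simp only [poch, prod_range_add, Nat.cast_add, add_assoc]

lemma poch_natCast_add_one (m k : ℕ) :
    poch ((m : ℂ) + 1) k = ((k + m).choose k : ℂ) * k.factorial := by
  have h := congrArg (Nat.cast (R := ℂ))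
    ((Nat.ascFactorial_eq_prod_range (m + 1) k).symm.trans
      (Nat.ascFactorial_eq_factorial_mul_choose m k))
  push_cast at h
  rw [poch, h, add_comm k m]
  ring

noncomputable def F01Term (c z : ℂ) (k : ℕ) : ℂ := z ^ k / (poch c k * k.factorial)

lemma F01Term_mul_left (c w z : ℂ) (k : ℕ) : F01Term c (w * z) k = w ^ k * F01Term c z k := by
  rw [F01Term, F01Term, mul_pow, mul_div_assoc]

lemma F01Term_succ {c : ℂ} {k : ℕ} (hck : c + k ≠ 0) (z : ℂ) :
    F01Term c z (k + 1) = F01Term c z k * (z / ((c + k) * (k + 1))) := by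
  have hk : (k : ℂ) + 1 ≠ 0 := by exact_mod_cast k.succ_ne_zero
  rw [F01Term, F01Term, poch_succ, Nat.factorial_succ, pow_succ]
  push_cast
  rcases eq_or_ne (poch c k) 0 with h | h
  · simp [h]
  · field_simp

lemma natCast_sub_norm_le_norm_add (c : ℂ) (s : ℕ) : (s : ℝ) - ‖c‖ ≤ ‖c + s‖ := by
  simpa [sub_neg_eq_add, add_comm] using norm_sub_norm_le (s : ℂ) (-c)

lemma summable_norm_F01Term (c z : ℂ) : Summable fun k => ‖F01Term c z k‖ := by
  refine summable_of_ratio_norm_eventually_le (r := 1 / 2) (by norm_num) ?_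
  filter_upwards [eventually_ge_atTop ⌈‖c‖ + 2 * ‖z‖ + 1⌉₊] with k hk
  have hk' : ‖c‖ + 2 * ‖z‖ + 1 ≤ k := Nat.ceil_le.1 hk
  have hck : 1 ≤ ‖c + k‖ := by linarith [natCast_sub_norm_le_norm_add c k, norm_nonneg z]
  have hk1 : ‖(k : ℂ) + 1‖ = k + 1 := by exact_mod_cast Complex.norm_natCast (k + 1)
  have hratio : ‖z / ((c + k) * (k + 1))‖ ≤ 1 / 2 := by
    rw [norm_div, norm_mul, hk1, div_le_iff₀ (by positivity)]
    nlinarith [mul_le_mul_of_nonneg_right hck (by positivity : (0 : ℝ) ≤ k + 1), norm_nonneg c]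
  rw [norm_norm, norm_norm, F01Term_succ (norm_pos_iff.1 (by linarith)), norm_mul, mul_comm]
  exact mul_le_mul_of_nonneg_right hratio (norm_nonneg _)

noncomputable def denomCoeff (c z : ℂ) (n k : ℕ) : ℂ :=
  ((n - k).choose k : ℂ) * z ^ k * poch (c + k) (n - 2 * k)

lemma denomCoeff_of_lt (c z : ℂ) {n k : ℕ} (h : n < 2 * k) : denomCoeff c z n k = 0 := by
  simp [denomCoeff, Nat.choose_eq_zero_of_lt (show n - k < k by omega)]

lemma denomCoeff_zero_right (c z : ℂ) (n : ℕ) : denomCoeff c z n 0 = poch c n := by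
  simp [denomCoeff]

lemma denomCoeff_two_mul_add (c z : ℂ) (k m : ℕ) :
    denomCoeff c z (2 * k + m) k = ((k + m).choose k : ℂ) * z ^ k * poch (c + k) m := by
  rw [denomCoeff, show 2 * k + m - k = k + m by omega, show 2 * k + m - 2 * k = m by omega]

lemma denomCoeff_add_two_succ (c z : ℂ) (n k : ℕ) :
    denomCoeff c z (n + 2) (k + 1)
      = (c + n + 1) * denomCoeff c z (n + 1) (k + 1) + z * denomCoeff c z n k := by
  rcases lt_or_ge n (2 * k) with h | h
  · simp only [denomCoeff_of_lt c z (show n < 2 * k by omega),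
      denomCoeff_of_lt c z (show n + 2 < 2 * (k + 1) by omega),
      denomCoeff_of_lt c z (show n + 1 < 2 * (k + 1) by omega), mul_zero, add_zero]
  obtain ⟨m, rfl⟩ := Nat.exists_eq_add_of_le h
  cases m with
  | zero =>
    rw [denomCoeff_of_lt c z (show 2 * k + 0 + 1 < 2 * (k + 1) by omega),
      show 2 * k + 0 + 2 = 2 * (k + 1) + 0 by omega, denomCoeff_two_mul_add,
      denomCoeff_two_mul_add]
    simp only [add_zero, Nat.choose_self, Nat.cast_one, one_mul, poch, range_zero, prod_empty,
      mul_one, mul_zero, zero_add]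
    ring
  | succ m =>
    rw [show 2 * k + (m + 1) + 2 = 2 * (k + 1) + (m + 1) by omega,
      show 2 * k + (m + 1) + 1 = 2 * (k + 1) + m by omega,
      denomCoeff_two_mul_add, denomCoeff_two_mul_add, denomCoeff_two_mul_add,
      poch_succ, poch_succ', show k + 1 + (m + 1) = k + m + 1 + 1 by omega,
      show k + 1 + m = k + m + 1 by omega, show k + (m + 1) = k + m + 1 by omega]
    have hpascal := Nat.choose_succ_succ' (k + m + 1) k
    have habsorb :
        ((k + m + 1).choose (k + 1) : ℂ) * (k + 1) = ((k + m + 1).choose k) * (m + 1) := by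
      have := Nat.choose_succ_right_eq (k + m + 1) k
      rw [show k + m + 1 - k = m + 1 by omega] at this
      exact_mod_cast this
    push_cast [hpascal]
    rw [← add_assoc c]
    linear_combination -z ^ (k + 1) * poch (c + k + 1) m * habsorb

lemma contA_succ (a b : ℕ → ℂ) (n : ℕ) :
    contA a b (n + 1) = a 0 * contB (fun j => a (j + 1)) (fun j => b (j + 1)) n := by
  induction n using Nat.twoStepInduction with
  | zero => simp [contA, contB]
  | one => simp [contA, contB, mul_comm]
  | more n ih₁ ih₂ =>
    rw [contA, ih₁, ih₂, contB]
    ring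

lemma sum_range_denomCoeff_of_lt_two (c z : ℂ) {n N : ℕ} (hn : n < 2) (hN : 0 < N) :
    ∑ k ∈ range N, denomCoeff c z n k = poch c n := by
  rw [sum_eq_single_of_mem 0 (mem_range.2 hN) fun k _ hk => denomCoeff_of_lt c z (by omega),
    denomCoeff_zero_right]

lemma contB_eq_sum_denomCoeff {c z : ℂ} {a b : ℕ → ℂ} (ha : ∀ n, 1 ≤ n → a n = z)
    (hb : ∀ n, b n = c + n) (n : ℕ) :
    ∀ N, n < 2 * N → contB a b n = ∑ k ∈ range N, denomCoeff c z n k := by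
  induction n using Nat.twoStepInduction with
  | zero =>
    intro N hN
    rw [sum_range_denomCoeff_of_lt_two c z (by omega) (by omega), contB, poch, prod_range_zero]
  | one =>
    intro N hN
    rw [sum_range_denomCoeff_of_lt_two c z (by omega) (by omega), contB, hb, poch_succ, poch]
    simp
  | more n ih₁ ih₂ =>
    rintro (_ | N) hN
    · omega
    rw [contB, ih₂ (N + 1) (by omega), ih₁ N (by omega), sum_range_succ', sum_range_succ',
      denomCoeff_zero_right, denomCoeff_zero_right, hb, ha (n + 1) (by omega), poch_succ c (n + 1)]
    simp only [denomCoeff_add_two_succ, sum_add_distrib, ← mul_sum]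
    push_cast
    ring

lemma denomCoeff_div_poch {c : ℂ} (hc : ∀ n : ℕ, c ≠ -(n : ℂ)) (z : ℂ) (k m : ℕ) :
    denomCoeff c z (2 * k + m) k / poch c (2 * k + m)
      = F01Term c z k * ∏ j ∈ range k, (((m : ℂ) + 1 + j) / (c + k + m + j)) := by
  have hsplit : poch c (2 * k + m) = poch c k * poch (c + k) m * poch (c + k + m) k := by
    rw [show 2 * k + m = k + m + k by omega, poch_add, poch_add]
    push_cast
    rw [add_assoc c]
  have hne := poch_ne_zero hc (2 * k + m)
  rw [hsplit] at hne
  obtain ⟨⟨h₁, h₂⟩, h₃⟩ : (poch c k ≠ 0 ∧ poch (c + k) m ≠ 0) ∧ poch (c + k + m) k ≠ 0 := by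
    simpa only [mul_ne_zero_iff] using hne
  have hfac : (k.factorial : ℂ) ≠ 0 := by exact_mod_cast k.factorial_ne_zero
  rw [denomCoeff_two_mul_add, hsplit, F01Term, prod_div_distrib]
  change _ = _ * (poch ((m : ℂ) + 1) k / poch (c + k + m) k)
  rw [poch_natCast_add_one]
  field_simp

lemma exists_natCast_le_mul_norm_add {c : ℂ} (hc : ∀ n : ℕ, c ≠ -(n : ℂ)) :
    ∃ C : ℝ, 0 ≤ C ∧ ∀ s : ℕ, (s : ℝ) ≤ C * ‖c + s‖ := by
  have hpos (s : ℕ) : 0 < ‖c + s‖ := norm_pos_iff.2 fun h => hc s (by linear_combination h)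
  obtain ⟨C, hC⟩ := ((tendsto_natCast_div_add_atTop c).norm).bddAbove_range
  have hle (s : ℕ) : (s : ℝ) ≤ C * ‖c + s‖ := by
    have : ‖(s : ℂ) / (s + c)‖ ≤ C := hC ⟨s, rfl⟩
    rwa [norm_div, Complex.norm_natCast, add_comm, div_le_iff₀ (hpos s)] at this
  exact ⟨C, nonneg_of_mul_nonneg_left (by simpa using hle 0) (hpos 0), hle⟩

lemma norm_prod_ratio_le {c : ℂ} {C : ℝ} (hC₀ : 0 ≤ C) (hC : ∀ s : ℕ, (s : ℝ) ≤ C * ‖c + s‖)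
    (k m : ℕ) : ‖∏ j ∈ range k, (((m : ℂ) + 1 + j) / (c + k + m + j))‖ ≤ C ^ k := by
  rw [norm_prod]
  refine (prod_le_prod (fun _ _ => norm_nonneg _) fun j hj => ?_).trans_eq
    (by rw [prod_const, card_range] : ∏ _j ∈ range k, C = C ^ k)
  rw [norm_div]
  refine div_le_of_le_mul₀ (norm_nonneg _) hC₀ ?_
  have hnum : ‖(m : ℂ) + 1 + j‖ = ((m + 1 + j : ℕ) : ℝ) := by
    rw [← Complex.norm_natCast]
    push_cast
    rfl
  have hden : c + k + m + j = c + ((k + m + j : ℕ) : ℂ) := by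
    push_cast
    ring
  rw [hnum, hden]
  have hjk := mem_range.1 hj
  exact (Nat.cast_le.2 (by omega)).trans (hC (k + m + j))

lemma tendsto_prod_ratio (c : ℂ) (k : ℕ) :
    Tendsto (fun m : ℕ => ∏ j ∈ range k, (((m : ℂ) + 1 + j) / (c + k + m + j))) atTop (𝓝 1) := by
  have hfactor (j : ℕ) :
      Tendsto (fun m : ℕ => ((m : ℂ) + 1 + j) / (c + k + m + j)) atTop (𝓝 1) := by
    convert tendsto_add_mul_div_add_mul_atTop_nhds (1 + j : ℂ) (c + k + j) 1 one_ne_zero using 2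
    · ring_nf
    · simp
  simpa using tendsto_finsetProd (range k) fun j _ => hfactor j

lemma tendsto_tsum_denomCoeff_div_poch {c : ℂ} (hc : ∀ n : ℕ, c ≠ -(n : ℂ)) (z : ℂ) :
    Tendsto (fun n => ∑' k, denomCoeff c z n k / poch c n) atTop (𝓝 (F01 c z)) := by
  obtain ⟨C, hC₀, hC⟩ := exists_natCast_le_mul_norm_add hc
  refine tendsto_tsum_of_dominated_convergence (summable_norm_F01Term c (C * z)) (fun k => ?_)
    (Eventually.of_forall fun n k => ?_)
  · have hlim := ((tendsto_prod_ratio c k).comp (tendsto_sub_atTop_nat (2 * k))).const_mul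
      (F01Term c z k)
    rw [mul_one] at hlim
    refine hlim.congr' ?_
    filter_upwards [eventually_ge_atTop (2 * k)] with n hn
    obtain ⟨m, rfl⟩ := Nat.exists_eq_add_of_le hn
    rw [denomCoeff_div_poch hc, Function.comp_apply, Nat.add_sub_cancel_left]
  · rcases lt_or_ge n (2 * k) with hn | hn
    · rw [denomCoeff_of_lt c z hn, zero_div, norm_zero]
      exact norm_nonneg _
    obtain ⟨m, rfl⟩ := Nat.exists_eq_add_of_le hn
    rw [denomCoeff_div_poch hc, norm_mul, F01Term_mul_left, norm_mul, norm_pow, mul_comm,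
      Complex.norm_real, Real.norm_of_nonneg hC₀]
    exact mul_le_mul_of_nonneg_right (norm_prod_ratio_le hC₀ hC k m) (norm_nonneg _)

lemma tendsto_contB_div_poch {c z : ℂ} (hc : ∀ n : ℕ, c ≠ -(n : ℂ)) {a b : ℕ → ℂ}
    (ha : ∀ n, 1 ≤ n → a n = z) (hb : ∀ n, b n = c + n) :
    Tendsto (fun n => contB a b n / poch c n) atTop (𝓝 (F01 c z)) := by
  refine (tendsto_tsum_denomCoeff_div_poch hc z).congr fun n => ?_
  rw [contB_eq_sum_denomCoeff ha hb n (n + 1) (by omega), sum_div,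
    tsum_eq_sum (s := range (n + 1)) fun k hk => by
      rw [denomCoeff_of_lt c z (by rw [mem_range] at hk; omega), zero_div]]

/-- The approximants of the continued fraction
`c/(c + z/((c+1) + z/((c+2) + ⋯)))` converge to `₀F₁(c+1; z)/₀F₁(c; z)`. -/
theorem continued_fraction_F01 (c z : ℂ) (hc : ∀ n : ℕ, c ≠ -(n : ℂ))
    (hF : F01 c z ≠ 0) (a b : ℕ → ℂ)
    (ha0 : a 0 = c) (ha : ∀ n : ℕ, 1 ≤ n → a n = z)
    (hb : ∀ n : ℕ, b n = c + n) :
    Tendsto (fun n => contA a b (n + 1) / contB a b (n + 1)) atTop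
      (𝓝 (F01 (c + 1) z / F01 c z)) := by
  have hc₁ : ∀ n : ℕ, c + 1 ≠ -(n : ℂ) := fun n h =>
    hc (n + 1) (by push_cast; linear_combination h)
  have hB := tendsto_contB_div_poch hc ha hb
  have hB_tail := tendsto_contB_div_poch hc₁ (a := fun j => a (j + 1))
    (b := fun j => b (j + 1)) (fun n _ => ha (n + 1) (by omega)) fun n => by push_cast [hb]; ring
  refine (hB_tail.div (hB.comp (tendsto_add_atTop_nat 1)) hF).congr fun n => ?_
  have hp := poch_ne_zero hc₁ n
  simp only [Pi.div_apply, Function.comp_apply, contA_succ, ha0, poch_succ']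
  field_simp
end

section
/- Let q, z ∈ ℂ with |q| < 1 and suppose Σ_{k=0}^∞ q^{k²}·z^k/(q)_k ≠ 0. Define a, b : ℕ → ℂ by a_0 = 1, a_n = q^n·z for n ≥ 1, and b_n = 1 for all n, and let A, B be the canonical numerators and denominators of the continued fraction K(a_n/b_n) = 1/(1 + qz/(1 + q²z/(1 + ⋯))). Then the approximants A_n/B_n converge to (Σ_{k=0}^∞ q^{k(k+1)}·z^k/(q)_k)/(Σ_{k=0}^∞ q^{k²}·z^k/(q)_k) as n → ∞ (the Rogers–Ramanujan continued fraction expansion). -/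
open Finset Filter Topology

/-!
The series `F(t) = ∑ q^{k²} t^k / (q)_k` satisfies `F(t) = F(qt) + qt F(q²t)`, so `u n = F(qⁿ z)`
solves the recurrence `u n = u (n+1) + a (n+1) u (n+2)` backwards, i.e. it is a tail solution of the
three-term recurrence satisfied by the numerators `A` and denominators `B`. Pairing a forward solution
`X` with `u` gives the conserved quantity `X (n+1) u (n+1) + a (n+1) X n u (n+2)`, which equals `u 0`
for `B` and `u 1` for `A`. Since `∑ |a n| < ∞`, the sequences `A` and `B` stay bounded, and `a n → 0`,
`u n → F 0 = 1`; hence `A (n+1) / B (n+1) → u 1 / u 0`.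
-/

/-- q-Pochhammer symbol `(q)_k = ∏_{j=1}^k (1 - q^j)`, with `(q)_0 = 1`. -/
noncomputable def qPoch (q : ℂ) (k : ℕ) : ℂ := ∏ j ∈ Finset.range k, (1 - q ^ (j + 1))

section ContinuedFraction

variable {a b : ℕ → ℂ}

lemma contA_add_two (n : ℕ) :
    contA a b (n + 2) = b (n + 1) * contA a b (n + 1) + a (n + 1) * contA a b n := rfl

lemma contB_add_two (n : ℕ) :
    contB a b (n + 2) = b (n + 1) * contB a b (n + 1) + a (n + 1) * contB a b n := rfl

lemma mul_tail_add_mul_tail_eq {X u : ℕ → ℂ}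
    (hX : ∀ n, X (n + 2) = b (n + 1) * X (n + 1) + a (n + 1) * X n)
    (hu : ∀ n, u (n + 1) = b (n + 1) * u (n + 2) + a (n + 2) * u (n + 3)) (n : ℕ) :
    X (n + 1) * u (n + 1) + a (n + 1) * X n * u (n + 2) = X 1 * u 1 + a 1 * X 0 * u 2 := by
  induction n with
  | zero => rfl
  | succ n ih => linear_combination ih + u (n + 2) * hX n - X (n + 1) * hu n

lemma contA_mul_tail_add {u : ℕ → ℂ}
    (hu : ∀ n, u (n + 1) = b (n + 1) * u (n + 2) + a (n + 2) * u (n + 3)) (n : ℕ) :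
    contA a b (n + 1) * u (n + 1) + a (n + 1) * contA a b n * u (n + 2) = a 0 * u 1 := by
  rw [mul_tail_add_mul_tail_eq contA_add_two hu]
  simp [contA]

lemma contB_mul_tail_add {u : ℕ → ℂ}
    (hu : ∀ n, u n = b n * u (n + 1) + a (n + 1) * u (n + 2)) (n : ℕ) :
    contB a b (n + 1) * u (n + 1) + a (n + 1) * contB a b n * u (n + 2) = u 0 := by
  rw [mul_tail_add_mul_tail_eq contB_add_two (fun n => hu (n + 1)), hu 0]
  simp [contB]

theorem tendsto_contA_div_contB {u : ℕ → ℂ} {L : ℂ}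
    (hu : ∀ n, u n = b n * u (n + 1) + a (n + 1) * u (n + 2))
    (hlim : Tendsto u atTop (𝓝 L)) (hL : L ≠ 0) (hu0 : u 0 ≠ 0)
    (hA : Tendsto (fun n => a (n + 1) * contA a b n) atTop (𝓝 0))
    (hB : Tendsto (fun n => a (n + 1) * contB a b n) atTop (𝓝 0)) :
    Tendsto (fun n => contA a b (n + 1) / contB a b (n + 1)) atTop (𝓝 (a 0 * u 1 / u 0)) := by
  have hu2 : Tendsto (fun n => u (n + 2)) atTop (𝓝 L) := hlim.comp (tendsto_add_atTop_nat 2)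
  have hAu : Tendsto (fun n => contA a b (n + 1) * u (n + 1)) atTop (𝓝 (a 0 * u 1)) := by
    have h := tendsto_const_nhds (x := a 0 * u 1) |>.sub (hA.mul hu2)
    rw [zero_mul, sub_zero] at h
    refine h.congr fun n => ?_
    rw [← contA_mul_tail_add (fun n => hu (n + 1)) n]
    ring
  have hBu : Tendsto (fun n => contB a b (n + 1) * u (n + 1)) atTop (𝓝 (u 0)) := by
    have h := tendsto_const_nhds (x := u 0) |>.sub (hB.mul hu2)
    rw [zero_mul, sub_zero] at h
    refine h.congr fun n => ?_
    rw [← contB_mul_tail_add hu n]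
    ring
  have hev : ∀ᶠ n in atTop, u (n + 1) ≠ 0 :=
    (hlim.comp (tendsto_add_atTop_nat 1)).eventually_ne hL
  refine (hAu.div hBu hu0).congr' ?_
  filter_upwards [hev] with n hn using mul_div_mul_right _ _ hn

end ContinuedFraction

lemma isBoundedUnder_norm_of_add_two_eq {R : Type*} [SeminormedRing R] {X d : ℕ → R}
    (hX : ∀ n, X (n + 2) = X (n + 1) + d n * X n) (hd : Summable (‖d ·‖)) :
    IsBoundedUnder (· ≤ ·) atTop (‖X ·‖) := by
  set M : ℕ → ℝ := fun n => max ‖X n‖ ‖X (n + 1)‖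
  have hM : ∀ n, 0 ≤ M n := fun n => (norm_nonneg _).trans (le_max_left _ _)
  have hstep : ∀ n, M (n + 1) ≤ (1 + ‖d n‖) * M n := fun n => by
    have h1 : ‖X (n + 1)‖ ≤ M n := le_max_right _ _
    have h2 : ‖X (n + 2)‖ ≤ ‖X (n + 1)‖ + ‖d n‖ * ‖X n‖ := by
      rw [hX]
      exact (norm_add_le _ _).trans (by gcongr; exact norm_mul_le _ _)
    have h3 : ‖d n‖ * ‖X n‖ ≤ ‖d n‖ * M n := by gcongr; exact le_max_left _ _
    refine max_le ?_ ?_ <;> nlinarith [norm_nonneg (d n), hM n]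
  have hgrowth : ∀ n, M n ≤ M 0 * Real.exp (∑ j ∈ range n, ‖d j‖) := fun n => by
    induction n with
    | zero => simp
    | succ n ih =>
      have hexp := Real.add_one_le_exp ‖d n‖
      calc M (n + 1) ≤ (1 + ‖d n‖) * M n := hstep n
        _ ≤ Real.exp ‖d n‖ * (M 0 * Real.exp (∑ j ∈ range n, ‖d j‖)) :=
          mul_le_mul (by linarith) ih (hM n) (Real.exp_pos _).le
        _ = M 0 * Real.exp (∑ j ∈ range (n + 1), ‖d j‖) := by
          rw [sum_range_succ, Real.exp_add]; ring
  refine isBoundedUnder_of ⟨M 0 * Real.exp (∑' j, ‖d j‖), fun n => ?_⟩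
  calc ‖X n‖ ≤ M n := le_max_left _ _
    _ ≤ M 0 * Real.exp (∑ j ∈ range n, ‖d j‖) := hgrowth n
    _ ≤ M 0 * Real.exp (∑' j, ‖d j‖) := by
      have := hM 0
      gcongr
      exact hd.sum_le_tsum _ fun j _ => norm_nonneg _

section RogersRamanujanSeries

variable {q : ℂ}

noncomputable def rrTerm (q t : ℂ) (k : ℕ) : ℂ := q ^ (k ^ 2) * t ^ k / qPoch q k

noncomputable def rrSeries (q t : ℂ) : ℂ := ∑' k, rrTerm q t k

lemma qPoch_succ (q : ℂ) (k : ℕ) : qPoch q (k + 1) = qPoch q k * (1 - q ^ (k + 1)) :=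
  prod_range_succ _ _

lemma one_sub_norm_pow_le_norm_qPoch (hq : ‖q‖ < 1) (k : ℕ) : (1 - ‖q‖) ^ k ≤ ‖qPoch q k‖ := by
  induction k with
  | zero => simp [qPoch]
  | succ k ih =>
    have h : 1 - ‖q‖ ≤ ‖1 - q ^ (k + 1)‖ := calc
      1 - ‖q‖ ≤ ‖(1 : ℂ)‖ - ‖q ^ (k + 1)‖ := by
        rw [norm_one, norm_pow]
        linarith [pow_le_of_le_one (norm_nonneg q) hq.le (by omega : k + 1 ≠ 0)]
      _ ≤ ‖1 - q ^ (k + 1)‖ := norm_sub_norm_le _ _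
    rw [qPoch_succ, norm_mul, pow_succ]
    exact mul_le_mul ih h (by linarith) (norm_nonneg _)

lemma qPoch_ne_zero (hq : ‖q‖ < 1) (k : ℕ) : qPoch q k ≠ 0 :=
  norm_pos_iff.1 <| (pow_pos (by linarith) k).trans_le (one_sub_norm_pow_le_norm_qPoch hq k)

lemma summable_pow_sq_mul_pow {x r : ℝ} (hx0 : 0 ≤ x) (hx : x < 1) (hr : 0 ≤ r) :
    Summable (fun k : ℕ => x ^ (k ^ 2) * r ^ k) := by
  have hlim : Tendsto (fun k : ℕ => x ^ k * r) atTop (𝓝 0) := by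
    simpa using (tendsto_pow_atTop_nhds_zero_of_lt_one hx0 hx).mul_const r
  refine Summable.of_norm_bounded_eventually_nat
    (summable_geometric_of_lt_one (by norm_num : (0 : ℝ) ≤ 1 / 2) (by norm_num)) ?_
  filter_upwards [hlim.eventually (eventually_le_nhds (by norm_num : (0 : ℝ) < 1 / 2))] with k hk
  rw [Real.norm_of_nonneg (by positivity), sq, pow_mul, ← mul_pow]
  exact pow_le_pow_left₀ (by positivity) hk k

lemma norm_rrTerm_le (hq : ‖q‖ < 1) {t : ℂ} {R : ℝ} (ht : ‖t‖ ≤ R) (k : ℕ) :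
    ‖rrTerm q t k‖ ≤ ‖q‖ ^ (k ^ 2) * (R / (1 - ‖q‖)) ^ k := by
  have hq1 : 0 < 1 - ‖q‖ := by linarith
  have hR : 0 ≤ R := (norm_nonneg t).trans ht
  rw [rrTerm, norm_div, norm_mul, norm_pow, norm_pow, div_pow, mul_div_assoc]
  exact mul_le_mul_of_nonneg_left (div_le_div₀ (pow_nonneg hR k)
    (pow_le_pow_left₀ (norm_nonneg t) ht k) (pow_pos hq1 k)
    (one_sub_norm_pow_le_norm_qPoch hq k)) (by positivity)

lemma summable_rrTerm (hq : ‖q‖ < 1) (t : ℂ) : Summable (rrTerm q t) :=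
  .of_norm_bounded (summable_pow_sq_mul_pow (norm_nonneg q) hq
    (div_nonneg (norm_nonneg t) (by linarith))) (norm_rrTerm_le hq le_rfl)

lemma continuous_rrSeries (hq : ‖q‖ < 1) : Continuous (rrSeries q) := by
  refine continuous_iff_continuousAt.2 fun t => ?_
  have hR : ContinuousOn (rrSeries q) (Metric.closedBall 0 (‖t‖ + 1)) :=
    continuousOn_tsum (fun k => by unfold rrTerm; fun_prop)
      (summable_pow_sq_mul_pow (norm_nonneg q) hq (div_nonneg (by positivity) (by linarith)))
      fun k s hs => norm_rrTerm_le hq (mem_closedBall_zero_iff.1 hs) k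
  exact hR.continuousAt (Metric.closedBall_mem_nhds_of_mem (by simp))

lemma rrSeries_zero (q : ℂ) : rrSeries q 0 = 1 := by
  rw [rrSeries, tsum_eq_single 0 fun k hk => by simp [rrTerm, hk]]
  simp [rrTerm, qPoch]

lemma rrTerm_succ_sub (hq : ‖q‖ < 1) (t : ℂ) (k : ℕ) :
    rrTerm q t (k + 1) - rrTerm q (q * t) (k + 1) = q * t * rrTerm q (q ^ 2 * t) k := by
  have h0 := qPoch_ne_zero hq k
  have h1 : 1 - q ^ (k + 1) ≠ 0 := right_ne_zero_of_mul (qPoch_succ q k ▸ qPoch_ne_zero hq (k + 1))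
  rw [rrTerm, rrTerm, rrTerm, qPoch_succ]
  field_simp
  ring

lemma rrSeries_eq_add (hq : ‖q‖ < 1) (t : ℂ) :
    rrSeries q t = rrSeries q (q * t) + q * t * rrSeries q (q ^ 2 * t) := by
  have hs := summable_rrTerm hq t
  have hs' := summable_rrTerm hq (q * t)
  suffices rrSeries q t - rrSeries q (q * t) = q * t * rrSeries q (q ^ 2 * t) by
    linear_combination this
  rw [rrSeries, rrSeries, ← hs.tsum_sub hs', (hs.sub hs').tsum_eq_zero_add]
  simp only [rrTerm_succ_sub hq, tsum_mul_left, rrSeries]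
  simp [rrTerm]

end RogersRamanujanSeries

/-- The Rogers–Ramanujan continued fraction expansion: the approximants of
`1/(1 + qz/(1 + q²z/(1 + ⋯)))` converge to
`(∑ q^{k(k+1)} z^k/(q)_k)/(∑ q^{k²} z^k/(q)_k)`. -/
theorem rogers_ramanujan_expansion (q z : ℂ) (hq : ‖q‖ < 1)
    (hne : (∑' k : ℕ, q ^ (k ^ 2) * z ^ k / qPoch q k) ≠ 0)
    (a b : ℕ → ℂ) (ha0 : a 0 = 1) (ha : ∀ n : ℕ, 1 ≤ n → a n = q ^ n * z)
    (hb : ∀ n : ℕ, b n = 1) :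
    Tendsto (fun n => contA a b (n + 1) / contB a b (n + 1)) atTop
      (𝓝 ((∑' k : ℕ, q ^ (k * (k + 1)) * z ^ k / qPoch q k) /
            (∑' k : ℕ, q ^ (k ^ 2) * z ^ k / qPoch q k))) := by
  have ha' : ∀ n, a (n + 1) = q ^ (n + 1) * z := fun n => ha (n + 1) n.succ_pos
  set u : ℕ → ℂ := fun n => rrSeries q (q ^ n * z)
  have hu : ∀ n, u n = b n * u (n + 1) + a (n + 1) * u (n + 2) := fun n => by
    simp only [u, hb, ha', one_mul]
    convert rrSeries_eq_add hq (q ^ n * z) using 3 <;> ring_nf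
  have hlim : Tendsto u atTop (𝓝 1) := by
    have h0 : Tendsto (fun n => q ^ n * z) atTop (𝓝 0) := by
      simpa using (tendsto_pow_atTop_nhds_zero_of_norm_lt_one hq).mul_const z
    have h := ((continuous_rrSeries hq).tendsto 0).comp h0
    rwa [rrSeries_zero] at h
  have hd : Summable (fun n => ‖a (n + 1)‖) := by
    simpa [ha', pow_succ, mul_assoc] using
      ((summable_geometric_of_lt_one (norm_nonneg q) hq).mul_right (‖q‖ * ‖z‖))
  have hdecay : ∀ X : ℕ → ℂ, (∀ n, X (n + 2) = b (n + 1) * X (n + 1) + a (n + 1) * X n) →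
      Tendsto (fun n => a (n + 1) * X n) atTop (𝓝 0) := fun X hX =>
    (tendsto_zero_iff_norm_tendsto_zero.2 hd.tendsto_atTop_zero).zero_mul_isBoundedUnder_le
      (isBoundedUnder_norm_of_add_two_eq (fun n => by rw [hX, hb, one_mul]) hd)
  have hu0 : u 0 ≠ 0 := by simpa [u, rrSeries, rrTerm] using hne
  have hmain := tendsto_contA_div_contB hu hlim one_ne_zero hu0
    (hdecay _ contA_add_two) (hdecay _ contB_add_two)
  convert hmain using 3
  · simp only [ha0, one_mul, u, pow_one, rrSeries, rrTerm]
    exact tsum_congr fun k => by ring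
  · simp [u, rrSeries, rrTerm]
end
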